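/- Let B be a standard F-Brownian motion, let E be a continuous finite F-time-change with E_0 = 0 satisfying lim_{t→∞} E_t = ∞ and lim_{t→∞} E_t/t = 0 almost surely, and let x_0 > 0, σ > 0, μ ∈ ℝ. Define X_t := x_0 exp{ ρ t + (μ − σ²/2) E_t + σ B_{E_t} }. If ρ > 0, then X_t → ∞ almost surely as t → ∞; if ρ < 0, then X_t → 0 almost surely as t → ∞. -/

import Mathlib

/-!
The law of the iterated logarithm is more than is needed: it suffices that Brownian paths grow at
most linearly. On the dyadic grids of `[0, T]`, Doob's maximal inequality for the submartingale
`|B|` gives `P(max |B| ≥ c) ≤ E|B_T| / c`, and by path continuity the same bound holds for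
`sup_{s ≤ T} |B_s|`. Taking `T = c = 4^k` the bound is `E|N(0,1)| · 2^{-k}`, so by Borel–Cantelli
almost surely `|B_s| ≤ C (1 + |s|)` for all `s`. As `E_t / t → 0`, the exponent
`ρ t + (μ - σ²/2) E_t + σ B_{E_t}` is then `ρ t + o(t)`, which tends to `±∞` with the sign of `ρ`.
-/

open MeasureTheory Filter Topology Set

namespace TimeChangePaper

variable {Ω : Type*} {m : MeasurableSpace Ω}

/-- A real-valued process has càdlàg paths: right-continuous with left limits. -/
def CadlagPaths (Z : ℝ → Ω → ℝ) : Prop :=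
  ∀ ω : Ω, ∀ t : ℝ,
    Tendsto (fun s => Z s ω) (nhdsWithin t (Set.Ioi t)) (nhds (Z t ω)) ∧
    ∃ l : ℝ, Tendsto (fun s => Z s ω) (nhdsWithin t (Set.Iio t)) (nhds l)

/-- A real-valued process has càglàd paths: left-continuous with right limits. -/
def CagladPaths (H : ℝ → Ω → ℝ) : Prop :=
  ∀ ω : Ω, ∀ t : ℝ,
    Tendsto (fun s => H s ω) (nhdsWithin t (Set.Iio t)) (nhds (H t ω)) ∧
    ∃ l : ℝ, Tendsto (fun s => H s ω) (nhdsWithin t (Set.Ioi t)) (nhds l)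

/-- Left limit of the path of `Z` at time `t`. -/
noncomputable def leftLimP (Z : ℝ → Ω → ℝ) (t : ℝ) (ω : Ω) : ℝ :=
  Function.leftLim (fun s => Z s ω) t

/-- Jump of the path of `Z` at time `t`. -/
noncomputable def jumpP (Z : ℝ → Ω → ℝ) (t : ℝ) (ω : Ω) : ℝ :=
  Z t ω - leftLimP Z t ω

/-- Sum of the values `g s ω` over the (at most countably many nonzero) times
`s ∈ (0, t]`; used for sums of jump contributions `Σ_{0 < s ≤ t} g s ω`. -/
noncomputable def jumpSum (g : ℝ → Ω → ℝ) (t : ℝ) (ω : Ω) : ℝ :=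
  ∑' s : ℝ, Set.indicator (Set.Ioc (0:ℝ) t) (fun u => g u ω) s

/-- An `(F_t)`-time-change: a càdlàg, nondecreasing, nonnegative family of
(ℝ-valued, hence automatically finite) stopping times. -/
structure IsTimeChange (F : Filtration ℝ m) (T : ℝ → Ω → ℝ) : Prop where
  mono : ∀ ω, Monotone fun t => T t ω
  nonneg : ∀ ω t, 0 ≤ T t ω
  cadlag : CadlagPaths T
  stopping : ∀ t : ℝ, IsStoppingTime F (fun ω => (T t ω : WithTop ℝ))

/-- `Z` is in synchronization with the time-change `T`: almost surely, `Z` is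
constant on every interval `[T_{t-}, T_t]`. -/
def Synchronized (P : Measure Ω) (Z T : ℝ → Ω → ℝ) : Prop :=
  ∀ᵐ ω ∂P, ∀ t : ℝ, 0 ≤ t → ∀ u ∈ Set.Icc (leftLimP T t ω) (T t ω),
    ∀ v ∈ Set.Icc (leftLimP T t ω) (T t ω), Z u ω = Z v ω

/-- Local martingale: there is a localizing sequence of stopping times increasing
to infinity such that each stopped process is a martingale. -/
def IsLocalMartingale (F : Filtration ℝ m) (P : Measure Ω) (M : ℝ → Ω → ℝ) : Prop :=
  ∃ τ : ℕ → Ω → ℝ, (∀ n, IsStoppingTime F (fun ω => (τ n ω : WithTop ℝ))) ∧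
    (∀ᵐ ω ∂P, Tendsto (fun n => τ n ω) atTop atTop) ∧
    ∀ n, Martingale (MeasureTheory.stoppedProcess M (fun ω => (τ n ω : WithTop ℝ))) F P

/-- `Z` is an `F`-semimartingale: a càdlàg adapted process which is the sum of a
càdlàg local martingale and a càdlàg adapted process of finite variation on compacts. -/
def IsSemimartingale (F : Filtration ℝ m) (P : Measure Ω) (Z : ℝ → Ω → ℝ) : Prop :=
  CadlagPaths Z ∧ Adapted F Z ∧
  ∃ M A : ℝ → Ω → ℝ,
    IsLocalMartingale F P M ∧ CadlagPaths M ∧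
    CadlagPaths A ∧ Adapted F A ∧
    (∀ ω, ∀ a b : ℝ, BoundedVariationOn (fun s => A s ω) (Set.Icc a b)) ∧
    ∀ᵐ ω ∂P, ∀ t, Z t ω = M t ω + A t ω

/-- The predictable σ-algebra on `ℝ × Ω`, generated by the left-open stochastic
intervals `(s,t] × A` with `A ∈ F_s`, together with `{0} × A` with `A ∈ F_0`. -/
def predictableSigma (F : Filtration ℝ m) : MeasurableSpace (ℝ × Ω) :=
  MeasurableSpace.generateFrom
    ({C : Set (ℝ × Ω) | ∃ s t : ℝ, ∃ A : Set Ω,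
        s ≤ t ∧ MeasurableSet[F s] A ∧ C = Set.Ioc s t ×ˢ A} ∪
     {C : Set (ℝ × Ω) | ∃ A : Set Ω, MeasurableSet[F 0] A ∧ C = ({0} : Set ℝ) ×ˢ A})

/-- A process is `F`-predictable if it is measurable w.r.t. the predictable σ-algebra. -/
def Predictable (F : Filtration ℝ m) (H : ℝ → Ω → ℝ) : Prop :=
  @Measurable (ℝ × Ω) ℝ (predictableSigma F) _ fun p => H p.1 p.2

/-- Mesh of the partition `π` truncated to `[0, t]`. -/
noncomputable def mesh (π : ℕ → ℝ) (t : ℝ) : ℝ :=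
  ⨆ k : ℕ, (min (π (k + 1)) t - min (π k) t)

/-- `I` is (a version of) the Itô-type stochastic integral `t ↦ ∫_0^t H_s dZ_s`:
for every `t ≥ 0` and every deterministic sequence of partitions of `[0, ∞)` whose
mesh on `[0, t]` tends to `0`, the left-endpoint Riemann sums converge in
probability to `I_t`. -/
def IsStochIntegral (P : Measure Ω) (H Z I : ℝ → Ω → ℝ) : Prop :=
  ∀ t : ℝ, 0 ≤ t → ∀ π : ℕ → ℕ → ℝ,
    (∀ n, π n 0 = 0) → (∀ n, Monotone (π n)) →
    (∀ n, Tendsto (fun k => π n k) atTop atTop) →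
    Tendsto (fun n => mesh (π n) t) atTop (nhds 0) →
    TendstoInMeasure P
      (fun n ω => ∑' k : ℕ, H (π n k) ω * (Z (min (π n (k + 1)) t) ω - Z (min (π n k) t) ω))
      atTop (fun ω => I t ω)

/-- First hitting time process (generalized inverse) of the process `S`:
`T_t = inf {u > 0 : S_u > t}`. -/
noncomputable def hittingTimeOf (S : ℝ → Ω → ℝ) (t : ℝ) (ω : Ω) : ℝ :=
  sInf {u : ℝ | 0 < u ∧ t < S u ω}

/-- `D` and `E` are dual: either `E` is the first hitting time process of `D`, or
`D` is the first hitting time process of `E`. -/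
def DualPair (D E : ℝ → Ω → ℝ) : Prop :=
  (∀ t : ℝ, 0 ≤ t → ∀ ω, E t ω = hittingTimeOf D t ω) ∨
  (∀ t : ℝ, 0 ≤ t → ∀ ω, D t ω = hittingTimeOf E t ω)

/-- The pair of a strictly increasing semimartingale `D` (with `D_0 = 0`,
`lim D_t = ∞`) and a continuous time-change `E` (with `E_0 = 0`, `lim E_t = ∞`),
each inducing the other as its first hitting time process. -/
structure IsDualPair (F : Filtration ℝ m) (P : Measure Ω) (D E : ℝ → Ω → ℝ) : Prop where
  semimartD : IsSemimartingale F P D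
  strictMonoD : ∀ ω, StrictMonoOn (fun t => D t ω) (Set.Ici (0:ℝ))
  zeroD : ∀ ω, ∀ t ≤ (0:ℝ), D t ω = 0
  infD : ∀ᵐ ω ∂P, Tendsto (fun t => D t ω) atTop atTop
  timeChangeE : IsTimeChange F E
  contE : ∀ ω, Continuous fun t => E t ω
  zeroE : ∀ ω, ∀ t ≤ (0:ℝ), E t ω = 0
  infE : ∀ᵐ ω ∂P, Tendsto (fun t => E t ω) atTop atTop
  dual : DualPair D E

/-- Right-continuity of the filtration (part of the usual conditions). -/
def RightContinuousFiltration (F : Filtration ℝ m) : Prop :=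
  ∀ t : ℝ, (F t : MeasurableSpace Ω) = ⨅ (s : ℝ) (_ : t < s), F s

/-- Completeness of the filtration w.r.t. `P` (part of the usual conditions). -/
def CompleteFiltration (F : Filtration ℝ m) (P : Measure Ω) : Prop :=
  ∀ t : ℝ, ∀ N : Set Ω, P N = 0 → ∀ N' ⊆ N, MeasurableSet[F t] N'

/-- A standard `F`-Brownian motion: continuous adapted paths started at `0`, with
Gaussian increments `B_t - B_s ~ N(0, t-s)` independent of `F_s`. -/
def IsBrownianMotion (F : Filtration ℝ m) (P : Measure Ω) (B : ℝ → Ω → ℝ) : Prop :=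
  (∀ ω, ∀ t ≤ (0:ℝ), B t ω = 0) ∧
  (∀ ω, Continuous fun t => B t ω) ∧
  Adapted F B ∧
  ∀ s t : ℝ, 0 ≤ s → s ≤ t →
    P.map (fun ω => B t ω - B s ω) = ProbabilityTheory.gaussianReal 0 (Real.toNNReal (t - s)) ∧
    ProbabilityTheory.Indep
      (MeasurableSpace.comap (fun ω => B t ω - B s ω) inferInstance) (F s) P

open ProbabilityTheory
open scoped NNReal ENNReal

lemma exists_dyadic_mem_of_isOpen {U : Set ℝ} (hU : IsOpen U) {T s : ℝ} (hT : 0 < T)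
    (hs : s ∈ Icc 0 T) (hsU : s ∈ U) : ∃ j k : ℕ, k ≤ 2 ^ j ∧ k * T / 2 ^ j ∈ U := by
  obtain ⟨δ, hδ, hball⟩ := Metric.isOpen_iff.1 hU s hsU
  obtain ⟨j, hj⟩ := pow_unbounded_of_one_lt (T / δ) one_lt_two
  have h2j : (0 : ℝ) < 2 ^ j := by positivity
  have hx : 0 ≤ s * 2 ^ j / T := div_nonneg (mul_nonneg hs.1 h2j.le) hT.le
  set k := ⌊s * 2 ^ j / T⌋₊
  have hk : (k : ℝ) ≤ s * 2 ^ j / T := Nat.floor_le hx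
  have hk' : s * 2 ^ j / T < k + 1 := Nat.lt_floor_add_one _
  refine ⟨j, k, ?_, hball ?_⟩
  · have : s * 2 ^ j / T ≤ 2 ^ j := by
      rw [div_le_iff₀ hT, mul_comm]; gcongr; exact hs.2
    exact_mod_cast hk.trans this
  · rw [le_div_iff₀ hT] at hk
    rw [div_lt_iff₀ hT] at hk'
    rw [div_lt_iff₀ hδ] at hj
    have hdiff : k * T / 2 ^ j - s = (k * T - s * 2 ^ j) / 2 ^ j := by field_simp
    rw [Metric.mem_ball, Real.dist_eq, hdiff, abs_div, abs_of_pos h2j, div_lt_iff₀ h2j, abs_lt]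
    constructor <;> nlinarith

lemma abs_le_pow_add_mul_of_forall_abs_le_pow {f : ℝ → ℝ} {b : ℝ} (hb : 1 < b) {K : ℕ}
    (hf : ∀ k ≥ K, ∀ s ∈ Icc 0 (b ^ k), |f s| ≤ b ^ k) {s : ℝ} (hs : 0 ≤ s) :
    |f s| ≤ b ^ K + b * s := by
  by_cases hsK : s ≤ b ^ K
  · exact (hf K le_rfl s ⟨hs, hsK⟩).trans (le_add_of_nonneg_right (by positivity))
  obtain ⟨n, hn, hn'⟩ := exists_nat_pow_near ((one_le_pow₀ hb.le).trans (not_le.1 hsK).le) hb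
  have hKn : K < n + 1 := (pow_lt_pow_iff_right₀ hb).1 ((not_le.1 hsK).trans hn')
  calc |f s| ≤ b ^ (n + 1) := hf (n + 1) hKn.le s ⟨hs, hn'.le⟩
    _ = b * b ^ n := pow_succ' b n
    _ ≤ b * s := by gcongr
    _ ≤ b ^ K + b * s := le_add_of_nonneg_left (by positivity)

lemma eventually_mul_div_self {g : ℝ → ℝ} : ∀ᶠ t in atTop, t * (g t / t) = g t := by
  filter_upwards [eventually_ne_atTop 0] with t ht using mul_div_cancel₀ _ ht

lemma tendsto_atTop_of_tendsto_div_pos {g : ℝ → ℝ} {ρ : ℝ}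
    (hg : Tendsto (fun t => g t / t) atTop (𝓝 ρ)) (hρ : 0 < ρ) : Tendsto g atTop atTop :=
  (tendsto_id.atTop_mul_pos hρ hg).congr' eventually_mul_div_self

lemma tendsto_atBot_of_tendsto_div_neg {g : ℝ → ℝ} {ρ : ℝ}
    (hg : Tendsto (fun t => g t / t) atTop (𝓝 ρ)) (hρ : ρ < 0) : Tendsto g atTop atBot :=
  (tendsto_id.atTop_mul_neg hρ hg).congr' eventually_mul_div_self

lemma tendsto_comp_div_of_abs_le_mul {b e : ℝ → ℝ} {C : ℝ} (hb : ∀ s, |b s| ≤ C * (1 + |s|))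
    (he : Tendsto (fun t => e t / t) atTop (𝓝 0)) :
    Tendsto (fun t => b (e t) / t) atTop (𝓝 0) := by
  have hbound : Tendsto (fun t => C * (t⁻¹ + |e t / t|)) atTop (𝓝 (C * (0 + |0|))) :=
    (tendsto_inv_atTop_zero.add he.abs).const_mul C
  rw [abs_zero, add_zero, mul_zero] at hbound
  refine squeeze_zero_norm' ?_ hbound
  filter_upwards [eventually_gt_atTop 0] with t ht
  rw [Real.norm_eq_abs, abs_div, abs_div, abs_of_pos ht, div_le_iff₀ ht]
  calc |b (e t)| ≤ C * (1 + |e t|) := hb _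
    _ = C * (t⁻¹ + |e t| / t) * t := by field_simp

lemma tendsto_exponent_div {b e : ℝ → ℝ} {C : ℝ} (hb : ∀ s, |b s| ≤ C * (1 + |s|))
    (he : Tendsto (fun t => e t / t) atTop (𝓝 0)) (ρ a σ : ℝ) :
    Tendsto (fun t => (ρ * t + a * e t + σ * b (e t)) / t) atTop (𝓝 ρ) := by
  have h := (tendsto_const_nhds (x := ρ)).add ((he.const_mul a).add
    ((tendsto_comp_div_of_abs_le_mul hb he).const_mul σ))
  rw [mul_zero, mul_zero, add_zero, add_zero] at h
  refine h.congr' ?_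
  filter_upwards [eventually_ne_atTop 0] with t ht
  field_simp
  ring

lemma integral_abs_gaussianReal (v : ℝ≥0) :
    ∫ x, |x| ∂gaussianReal 0 v = √v * ∫ x, |x| ∂gaussianReal 0 1 := by
  have hscale : (gaussianReal 0 1).map (√v * ·) = gaussianReal 0 v := by
    simp [gaussianReal_map_const_mul]
  rw [← hscale, integral_map (by fun_prop) (by fun_prop)]
  simp only [abs_mul, abs_of_nonneg (Real.sqrt_nonneg _), integral_const_mul]

lemma _root_.ProbabilityTheory.HasLaw.integrable_of_gaussianReal {X : Ω → ℝ} {P : Measure Ω}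
    {μ : ℝ} {v : ℝ≥0} (hX : HasLaw X (gaussianReal μ v) P) : Integrable X P := by
  have h : Integrable id (P.map X) := hX.map_eq ▸ (memLp_id_gaussianReal 1).integrable le_rfl
  exact h.comp_aemeasurable hX.aemeasurable

def _root_.MeasureTheory.Filtration.comp (F : Filtration ℝ m) {u : ℕ → ℝ} (hu : Monotone u) :
    Filtration ℕ m :=
  ⟨fun i => F (u i), fun _ _ hij => F.mono (hu hij), fun _ => F.le _⟩

namespace IsBrownianMotion

variable {F : Filtration ℝ m} {P : Measure Ω} {B : ℝ → Ω → ℝ}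

lemma measurable (hB : IsBrownianMotion F P B) (t : ℝ) : Measurable (B t) :=
  (hB.2.2.1 t).mono (F.le t) le_rfl

lemma hasLaw_sub (hB : IsBrownianMotion F P B) {s t : ℝ} (hs : 0 ≤ s) (hst : s ≤ t) :
    HasLaw (fun ω => B t ω - B s ω) (gaussianReal 0 (t - s).toNNReal) P :=
  ⟨((hB.measurable t).sub (hB.measurable s)).aemeasurable, (hB.2.2.2 s t hs hst).1⟩

lemma hasLaw (hB : IsBrownianMotion F P B) {t : ℝ} (ht : 0 ≤ t) :
    HasLaw (B t) (gaussianReal 0 t.toNNReal) P := by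
  simpa [hB.1 _ 0 le_rfl] using hB.hasLaw_sub le_rfl ht

lemma integral_abs (hB : IsBrownianMotion F P B) {t : ℝ} (ht : 0 ≤ t) :
    ∫ ω, |B t ω| ∂P = √t * ∫ x, |x| ∂gaussianReal 0 1 := by
  calc ∫ ω, |B t ω| ∂P = ∫ x, |x| ∂gaussianReal 0 t.toNNReal :=
        (hB.hasLaw ht).integral_comp (f := fun x => |x|) (by fun_prop)
    _ = √t * ∫ x, |x| ∂gaussianReal 0 1 := by
      rw [integral_abs_gaussianReal, Real.coe_toNNReal t ht]

lemma condExp_eq [IsFiniteMeasure P] (hB : IsBrownianMotion F P B) {s t : ℝ} (hs : 0 ≤ s)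
    (hst : s ≤ t) : P[B t | F s] =ᵐ[P] B s := by
  have hinc := hB.hasLaw_sub hs hst
  have hBs : Integrable (B s) P := (hB.hasLaw hs).integrable_of_gaussianReal
  have hincrement : P[fun ω => B t ω - B s ω | F s] =ᵐ[P] 0 := by
    refine (condExp_indep_eq ((hB.measurable t).sub (hB.measurable s)).comap_le (F.le s)
      (Measurable.of_comap_le le_rfl).stronglyMeasurable (hB.2.2.2 s t hs hst).2).trans ?_
    have hmean : ∫ ω, (B t ω - B s ω) ∂P = 0 := by
      rw [hinc.integral_eq, integral_id_gaussianReal]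
    exact .of_eq (funext fun _ => hmean)
  calc P[B t | F s] = P[B s + fun ω => B t ω - B s ω | F s] := by congr 1; ext; simp
    _ =ᵐ[P] P[B s | F s] + P[fun ω => B t ω - B s ω | F s] :=
      condExp_add hBs hinc.integrable_of_gaussianReal _
    _ =ᵐ[P] B s + 0 := by
      rw [condExp_of_stronglyMeasurable (F.le s) (hB.2.2.1 s).stronglyMeasurable hBs]
      exact EventuallyEq.rfl.add hincrement
    _ = B s := add_zero _

lemma martingale_comp [IsFiniteMeasure P] (hB : IsBrownianMotion F P B) {u : ℕ → ℝ}
    (hu : Monotone u) (hu0 : 0 ≤ u 0) :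
    Martingale (fun i => B (u i)) (F.comp hu) P :=
  ⟨fun i => (hB.2.2.1 (u i)).stronglyMeasurable,
    fun i _ hij => hB.condExp_eq (hu0.trans (hu (Nat.zero_le i))) (hu hij)⟩

lemma measure_exists_le_abs_le [IsFiniteMeasure P] (hB : IsBrownianMotion F P B) {u : ℕ → ℝ}
    (hu : Monotone u) (hu0 : 0 ≤ u 0) (n : ℕ) {c : ℝ} (hc : 0 < c) :
    P {ω | ∃ k ≤ n, c ≤ |B (u k) ω|} ≤ ENNReal.ofReal ((∫ ω, |B (u n) ω| ∂P) / c) := by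
  have hm := hB.martingale_comp hu hu0
  have habs : Submartingale (fun i ω => |B (u i) ω|) (F.comp hu) P :=
    hm.submartingale.sup hm.neg.submartingale
  have hdoob := maximal_ineq habs (fun _ _ => abs_nonneg _) (ε := c.toNNReal) n
  simp only [Real.coe_toNNReal _ hc.le, Finset.le_sup'_iff, Finset.mem_range,
    Nat.lt_succ_iff] at hdoob
  have hint : Integrable (fun ω => |B (u n) ω|) P :=
    (hB.hasLaw (hu0.trans (hu n.zero_le))).integrable_of_gaussianReal.abs
  rw [ENNReal.ofReal_div_of_pos hc, ENNReal.le_div_iff_mul_le (by simp [hc]) (by simp), mul_comm]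
  exact hdoob.trans (ENNReal.ofReal_le_ofReal
    (setIntegral_le_integral hint (ae_of_all _ fun _ => abs_nonneg _)))

lemma measure_exists_lt_abs_le [IsFiniteMeasure P] (hB : IsBrownianMotion F P B) {T c : ℝ}
    (hT : 0 < T) (hc : 0 < c) :
    P {ω | ∃ s ∈ Icc 0 T, c < |B s ω|} ≤ ENNReal.ofReal ((∫ ω, |B T ω| ∂P) / c) := by
  set A : ℕ → Set Ω := fun j => {ω | ∃ k : ℕ, k ≤ 2 ^ j ∧ c ≤ |B (k * T / 2 ^ j) ω|}
  have hA_mono : Monotone A := by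
    refine monotone_nat_of_le_succ fun j ω ⟨k, hk, hkω⟩ => ⟨2 * k, by rw [pow_succ]; omega, ?_⟩
    have htime : ((2 * k : ℕ) : ℝ) * T / 2 ^ (j + 1) = k * T / 2 ^ j := by
      push_cast; field_simp; ring
    rwa [htime]
  have hA_le : ∀ j, P (A j) ≤ ENNReal.ofReal ((∫ ω, |B T ω| ∂P) / c) := by
    intro j
    have hu : Monotone fun k : ℕ => k * T / 2 ^ j := fun a b hab => by
      dsimp only; gcongr
    simpa [A] using hB.measure_exists_le_abs_le hu (by simp) (2 ^ j) hc
  have hcover : {ω | ∃ s ∈ Icc 0 T, c < |B s ω|} ⊆ ⋃ j, A j := by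
    rintro ω ⟨s, hs, hsω⟩
    obtain ⟨j, k, hk, hkω⟩ := exists_dyadic_mem_of_isOpen
      (isOpen_lt continuous_const (hB.2.1 ω).abs) hT hs hsω
    exact mem_iUnion.2 ⟨j, k, hk, le_of_lt hkω⟩
  calc P {ω | ∃ s ∈ Icc 0 T, c < |B s ω|} ≤ P (⋃ j, A j) := measure_mono hcover
    _ = ⨆ j, P (A j) := hA_mono.measure_iUnion
    _ ≤ _ := iSup_le hA_le

lemma ae_exists_abs_le_mul [IsFiniteMeasure P] (hB : IsBrownianMotion F P B) :
    ∀ᵐ ω ∂P, ∃ C, ∀ s, |B s ω| ≤ C * (1 + |s|) := by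
  set κ := ∫ x, |x| ∂gaussianReal 0 1 with hκ_def
  have hbad : ∀ k : ℕ, P {ω | ∃ s ∈ Icc 0 (4 ^ k), 4 ^ k < |B s ω|}
      ≤ ENNReal.ofReal (κ * 2⁻¹ ^ k) := by
    intro k
    refine (hB.measure_exists_lt_abs_le (by positivity) (by positivity)).trans_eq ?_
    have h4 : (4 : ℝ) ^ k = 2 ^ k * 2 ^ k := by rw [← mul_pow]; norm_num
    rw [hB.integral_abs (by positivity), ← hκ_def, h4, Real.sqrt_mul_self (by positivity), inv_pow]
    congr 1
    field_simp
  have hsum : ∑' k, P {ω | ∃ s ∈ Icc 0 (4 ^ k), 4 ^ k < |B s ω|} ≠ ⊤ := by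
    refine ne_top_of_le_ne_top ?_ (ENNReal.tsum_le_tsum hbad)
    rw [← ENNReal.ofReal_tsum_of_nonneg (fun k => by positivity)
      ((summable_geometric_of_lt_one (by norm_num) (by norm_num)).mul_left κ)]
    exact ENNReal.ofReal_ne_top
  filter_upwards [ae_eventually_notMem hsum] with ω hω
  obtain ⟨K, hK⟩ := eventually_atTop.1 hω
  refine ⟨4 ^ K + 4, fun s => ?_⟩
  rcases le_or_gt s 0 with hs | hs
  · rw [hB.1 ω s hs, abs_zero]; positivity
  have hgrowth := abs_le_pow_add_mul_of_forall_abs_le_pow (f := fun s => B s ω)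
    (by norm_num : (1 : ℝ) < 4) (fun k hk s hs => not_lt.1 fun h => hK k hk ⟨s, hs, h⟩) hs.le
  rw [abs_of_pos hs]
  nlinarith [pow_pos (by norm_num : (0 : ℝ) < 4) K]

end IsBrownianMotion

theorem timeChanged_blackScholes_asymptotics_general
    (F : Filtration ℝ m) (P : Measure Ω) [IsProbabilityMeasure P]
    (B E : ℝ → Ω → ℝ)
    (hB : IsBrownianMotion F P B)
    (hEslow : ∀ᵐ ω ∂P, Tendsto (fun t => E t ω / t) atTop (nhds 0))
    (x₀ σ μ ρ : ℝ) (hx₀ : 0 < x₀)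
    (X : ℝ → Ω → ℝ)
    (hX : ∀ t ω, X t ω =
      x₀ * Real.exp (ρ * t + (μ - σ ^ 2 / 2) * E t ω + σ * B (E t ω) ω)) :
    (0 < ρ → ∀ᵐ ω ∂P, Tendsto (fun t => X t ω) atTop atTop) ∧
    (ρ < 0 → ∀ᵐ ω ∂P, Tendsto (fun t => X t ω) atTop (nhds 0)) := by
  have hexponent : ∀ᵐ ω ∂P, Tendsto
      (fun t => (ρ * t + (μ - σ ^ 2 / 2) * E t ω + σ * B (E t ω) ω) / t) atTop (𝓝 ρ) := by
    filter_upwards [hB.ae_exists_abs_le_mul, hEslow] with ω ⟨C, hC⟩ hω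
    exact tendsto_exponent_div hC hω ρ _ σ
  simp only [hX]
  refine ⟨fun hρ => ?_, fun hρ => ?_⟩ <;> filter_upwards [hexponent] with ω hω
  · exact (Real.tendsto_exp_atTop.comp
      (tendsto_atTop_of_tendsto_div_pos hω hρ)).const_mul_atTop hx₀
  · simpa using (Real.tendsto_exp_atBot.comp
      (tendsto_atBot_of_tendsto_div_neg hω hρ)).const_mul x₀

/-- **Example 5.1, asymptotics of the time-changed Black–Scholes
model when `E_t` is asymptotically slower than `t`.** Let `B` be a standard
`F`-Brownian motion and `E` a continuous finite `F`-time-change with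
`lim_{t→∞} E_t = ∞` and `lim_{t→∞} E_t/t = 0` a.s. Let
`X_t = x_0 exp{ρt + (μ - σ²/2)E_t + σ B_{E_t}}` with `x_0 > 0`, `σ > 0`.
If `ρ > 0` then `X_t → ∞` a.s.; if `ρ < 0` then `X_t → 0` a.s. -/
theorem timeChanged_blackScholes_asymptotics
    (F : Filtration ℝ m) (P : Measure Ω) [IsProbabilityMeasure P]
    (B E : ℝ → Ω → ℝ)
    (hB : IsBrownianMotion F P B)
    (hE : IsTimeChange F E)
    (hEcont : ∀ ω, Continuous fun t => E t ω)
    (hE0 : ∀ ω, ∀ t ≤ (0:ℝ), E t ω = 0)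
    (hEinf : ∀ᵐ ω ∂P, Tendsto (fun t => E t ω) atTop atTop)
    (hEslow : ∀ᵐ ω ∂P, Tendsto (fun t => E t ω / t) atTop (nhds 0))
    (x₀ σ μ ρ : ℝ) (hx₀ : 0 < x₀) (hσ : 0 < σ)
    (X : ℝ → Ω → ℝ)
    (hX : ∀ t ω, X t ω =
      x₀ * Real.exp (ρ * t + (μ - σ ^ 2 / 2) * E t ω + σ * B (E t ω) ω)) :
    (0 < ρ → ∀ᵐ ω ∂P, Tendsto (fun t => X t ω) atTop atTop) ∧
    (ρ < 0 → ∀ᵐ ω ∂P, Tendsto (fun t => X t ω) atTop (nhds 0)) :=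
  timeChanged_blackScholes_asymptotics_general F P B E hB hEslow x₀ σ μ ρ hx₀ X hX

end TimeChangePaper
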